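/- arXiv:2506.16930 — 3 statements merged into one kernel-verified Lean document; each statement's English description precedes it below -/
import Mathlib

section
/- The strong average smoothness class is strictly contained in the bounded variation class: every f : [0,1] → ℝ with ‖f‖_s < ∞ satisfies V(f) < ∞, and there exists f : [0,1] → ℝ with V(f) < ∞ but ‖f‖_s = ∞. -/
/-!
For `x' ≠ x` in `[0,1]` we have `|f x - f x'| ≤ Λ_f(x) |x - x'|`, so the triangle inequality
through any `x ∈ [a,b]` gives `|f b - f a| ≤ Λ_f(x) (b - a)`; averaging over `x ∈ (a,b]` yields
`|f b - f a| ≤ ∫_{(a,b]} Λ_f`, and summing over a partition bounds `V(f)` by `‖f‖_s`.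
Conversely, the unit jump at `0` is monotone, hence of bounded variation, while its local slope
at `x ∈ (0,1]` is at least `1/x`, which is not integrable near `0`.
-/

open MeasureTheory Set ENNReal

/-- The local slope of `f` at `x`: `Λ_f(x) = sup_{x' ∈ [0,1], x' ≠ x} |f(x) − f(x')|/|x − x'|`,
valued in `[0,∞]`. -/
noncomputable def locSlope (f : ℝ → ℝ) (x : ℝ) : ℝ≥0∞ :=
  ⨆ (x' : ℝ) (_ : x' ∈ Set.Icc (0:ℝ) 1) (_ : x' ≠ x),
    ENNReal.ofReal (|f x - f x'| / |x - x'|)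

/-- Strong average smoothness: `‖f‖_s = ∫_{[0,1]} Λ_f(x) dx`. -/
noncomputable def strongNorm (f : ℝ → ℝ) : ℝ≥0∞ :=
  ∫⁻ x in Set.Icc (0:ℝ) 1, locSlope f x

/-- Weak average smoothness: `‖f‖_w = sup_{t>0} t·λ({x ∈ [0,1] : Λ_f(x) ≥ t})`. -/
noncomputable def weakNorm (f : ℝ → ℝ) : ℝ≥0∞ :=
  ⨆ (t : ℝ) (_ : 0 < t),
    ENNReal.ofReal t * volume {x ∈ Set.Icc (0:ℝ) 1 | ENNReal.ofReal t ≤ locSlope f x}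

/-- Total variation of `f` on `[0,1]`. -/
noncomputable def totalVar (f : ℝ → ℝ) : ℝ≥0∞ := eVariationOn f (Set.Icc 0 1)

lemma ofReal_slope_le_locSlope (f : ℝ → ℝ) {x x' : ℝ} (hx' : x' ∈ Icc (0:ℝ) 1) (hne : x' ≠ x) :
    ENNReal.ofReal (|f x - f x'| / |x - x'|) ≤ locSlope f x :=
  le_iSup₂_of_le x' hx' (le_iSup_of_le hne le_rfl)

lemma edist_le_locSlope_mul (f : ℝ → ℝ) (x : ℝ) {x' : ℝ} (hx' : x' ∈ Icc (0:ℝ) 1) :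
    edist (f x) (f x') ≤ locSlope f x * edist x x' := by
  rcases eq_or_ne x' x with rfl | hne
  · simp
  have hdist : 0 < |x - x'| := abs_pos.2 (sub_ne_zero.2 hne.symm)
  calc edist (f x) (f x') = ENNReal.ofReal (|f x - f x'| / |x - x'|) * edist x x' := by
        rw [edist_dist, edist_dist, Real.dist_eq, Real.dist_eq,
          ← ENNReal.ofReal_mul (by positivity), div_mul_cancel₀ _ hdist.ne']
    _ ≤ locSlope f x * edist x x' := by gcongr; exact ofReal_slope_le_locSlope f hx' hne

lemma edist_le_locSlope_mul_of_mem_Icc (f : ℝ → ℝ) {a b x : ℝ} (ha : a ∈ Icc (0:ℝ) 1)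
    (hb : b ∈ Icc (0:ℝ) 1) (hx : x ∈ Icc a b) :
    edist (f a) (f b) ≤ locSlope f x * ENNReal.ofReal (b - a) := by
  have hsplit : edist x a + edist x b = ENNReal.ofReal (b - a) := by
    rw [edist_dist, edist_dist, Real.dist_eq, Real.dist_eq, abs_of_nonneg (sub_nonneg.2 hx.1),
      abs_of_nonpos (sub_nonpos.2 hx.2), ← ENNReal.ofReal_add (sub_nonneg.2 hx.1)
      (neg_nonneg.2 (sub_nonpos.2 hx.2))]
    congr 1
    ring
  calc edist (f a) (f b) ≤ edist (f x) (f a) + edist (f x) (f b) := edist_triangle_left _ _ _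
    _ ≤ locSlope f x * edist x a + locSlope f x * edist x b :=
        add_le_add (edist_le_locSlope_mul f x ha) (edist_le_locSlope_mul f x hb)
    _ = locSlope f x * ENNReal.ofReal (b - a) := by rw [← mul_add, hsplit]

lemma edist_le_setLIntegral_locSlope (f : ℝ → ℝ) {a b : ℝ} (ha : a ∈ Icc (0:ℝ) 1)
    (hb : b ∈ Icc (0:ℝ) 1) (hab : a ≤ b) :
    edist (f a) (f b) ≤ ∫⁻ x in Ioc a b, locSlope f x := by
  rcases hab.eq_or_lt with rfl | hab
  · simp
  have hlen : ENNReal.ofReal (b - a) ≠ 0 := by simpa using hab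
  calc edist (f a) (f b) = ∫⁻ _ in Ioc a b, edist (f a) (f b) / ENNReal.ofReal (b - a) := by
        rw [setLIntegral_const, Real.volume_Ioc, ENNReal.div_mul_cancel hlen ofReal_ne_top]
    _ ≤ ∫⁻ x in Ioc a b, locSlope f x :=
        setLIntegral_mono' measurableSet_Ioc fun x hx => ENNReal.div_le_of_le_mul
          (edist_le_locSlope_mul_of_mem_Icc f ha hb (Ioc_subset_Icc_self hx))

lemma sum_setLIntegral_Ioc_le {μ : Measure ℝ} (g : ℝ → ℝ≥0∞) {u : ℕ → ℝ} (hu : Monotone u)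
    {s : Set ℝ} (hs : ∀ i, Ioc (u i) (u (i + 1)) ⊆ s) (n : ℕ) :
    ∑ i ∈ Finset.range n, ∫⁻ x in Ioc (u i) (u (i + 1)), g x ∂μ ≤ ∫⁻ x in s, g x ∂μ := by
  have hdisj : Pairwise (Function.onFun Disjoint fun i => Ioc (u i) (u (i + 1))) :=
    hu.pairwise_disjoint_on_Ioc_succ
  rw [← lintegral_biUnion_finset (hdisj.set_pairwise _) (fun _ _ => measurableSet_Ioc)]
  exact lintegral_mono_set (iUnion₂_subset fun i _ => hs i)

theorem totalVar_le_strongNorm (f : ℝ → ℝ) : totalVar f ≤ strongNorm f := by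
  refine iSup_le fun ⟨n, u, hu, hmem⟩ => ?_
  calc ∑ i ∈ Finset.range n, edist (f (u (i + 1))) (f (u i))
      ≤ ∑ i ∈ Finset.range n, ∫⁻ x in Ioc (u i) (u (i + 1)), locSlope f x :=
        Finset.sum_le_sum fun i _ => edist_comm (f (u (i + 1))) (f (u i)) ▸
          edist_le_setLIntegral_locSlope f (hmem i) (hmem (i + 1)) (hu i.le_succ)
    _ ≤ strongNorm f := sum_setLIntegral_Ioc_le _ hu
        (fun i => Ioc_subset_Icc_self.trans (Icc_subset_Icc (hmem i).1 (hmem (i + 1)).2)) n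

lemma monotone_indicator_Ioi_zero_one : Monotone ((Ioi (0:ℝ)).indicator (1 : ℝ → ℝ)) := by
  intro x y hxy
  by_cases hx : 0 < x
  · simp [hx, hx.trans_le hxy]
  · rw [indicator_of_notMem (show x ∉ Ioi 0 from hx)]
    exact indicator_nonneg (fun _ _ => zero_le_one) y

lemma totalVar_indicator_Ioi_zero_one_lt_top :
    totalVar ((Ioi (0:ℝ)).indicator 1) < ⊤ := by
  have hBV := (monotone_indicator_Ioi_zero_one.monotoneOn univ).locallyBoundedVariationOn
    0 1 trivial trivial
  rw [univ_inter] at hBV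
  exact lt_top_iff_ne_top.2 hBV

lemma setLIntegral_ofReal_inv_Ioc_zero_one : ∫⁻ x in Ioc (0:ℝ) 1, ENNReal.ofReal x⁻¹ = ⊤ := by
  by_contra hfin
  have hint : IntegrableOn (fun x : ℝ => x⁻¹) (Ioc 0 1) :=
    (lintegral_ofReal_ne_top_iff_integrable measurable_inv.aestronglyMeasurable
      ((ae_restrict_mem measurableSet_Ioc).mono fun x hx => inv_nonneg.2 hx.1.le)).1 hfin
  have := intervalIntegrable_inv_iff.1 ((intervalIntegrable_iff_integrableOn_Ioc_of_le
    zero_le_one).2 hint)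
  simp at this

lemma strongNorm_indicator_Ioi_zero_one : strongNorm ((Ioi (0:ℝ)).indicator 1) = ⊤ := by
  refine top_le_iff.1 ?_
  calc ⊤ = ∫⁻ x in Ioc (0:ℝ) 1, ENNReal.ofReal x⁻¹ := setLIntegral_ofReal_inv_Ioc_zero_one.symm
    _ ≤ ∫⁻ x in Ioc (0:ℝ) 1, locSlope ((Ioi (0:ℝ)).indicator 1) x := by
        refine setLIntegral_mono' measurableSet_Ioc fun x hx => ?_
        have hslope := ofReal_slope_le_locSlope ((Ioi (0:ℝ)).indicator 1)
          (left_mem_Icc.2 zero_le_one) hx.1.ne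
        simpa [hx.1, abs_of_pos hx.1] using hslope
    _ ≤ strongNorm ((Ioi (0:ℝ)).indicator 1) := lintegral_mono_set Ioc_subset_Icc_self

/-- The strong average smoothness class is strictly contained in the BV class. -/
theorem strong_class_strictly_in_BV :
    (∀ f : ℝ → ℝ, strongNorm f < ⊤ → totalVar f < ⊤) ∧
    (∃ f : ℝ → ℝ, totalVar f < ⊤ ∧ strongNorm f = ⊤) :=
  ⟨fun f hf => (totalVar_le_strongNorm f).trans_lt hf,
    (Ioi (0:ℝ)).indicator 1, totalVar_indicator_Ioi_zero_one_lt_top,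
    strongNorm_indicator_Ioi_zero_one⟩
end

section
/- The step function f : [0,1] → ℝ defined by f(x) = 1 if x > 1/2 and f(x) = 0 otherwise satisfies V(f) = 1, ‖f‖_s = ∞, and ‖f‖_w = 2; in particular f witnesses tightness of the inequality ‖f‖_w ≤ 2·V(f). -/
open MeasureTheory Set ENNReal

/-!
The step function `s = 𝟙_{x > 1/2}` is monotone with a single unit jump, so its variation on
`[0,1]` is `s 1 - s 0 = 1`. Its local slope at `x` is at most `1 / |x - 1/2|`, with equality to
the right of `1/2` (compare with the point `1/2` itself). The non-integrable singularity
`1 / (x - 1/2)` makes `‖s‖_s` infinite, while the bound `Λ_s(x) ≤ 1 / |x - 1/2|` confines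
`{Λ_s ≥ t}` to an interval of length `2 / t`, so `‖s‖_w ≤ 2`; the level `t = 4` already attains
`2`, since every point of `(1/4, 3/4)` lies within `1/4` of a point on the other side of the jump.
-/

section General

variable {f : ℝ → ℝ}

lemma le_locSlope {x x' : ℝ} (hx' : x' ∈ Icc (0 : ℝ) 1) (hne : x' ≠ x) :
    ENNReal.ofReal (|f x - f x'| / |x - x'|) ≤ locSlope f x :=
  le_iSup_of_le x' <| le_iSup_of_le hx' <| le_iSup_of_le hne le_rfl

lemma le_weakNorm {t : ℝ} (ht : 0 < t) :
    ENNReal.ofReal t * volume {x ∈ Icc (0 : ℝ) 1 | ENNReal.ofReal t ≤ locSlope f x}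
      ≤ weakNorm f :=
  le_iSup₂_of_le t ht le_rfl

lemma weakNorm_le_two_of_locSlope_le (c : ℝ)
    (h : ∀ x ∈ Icc (0 : ℝ) 1, locSlope f x ≤ (ENNReal.ofReal |x - c|)⁻¹) :
    weakNorm f ≤ 2 := by
  refine iSup₂_le fun t ht => ?_
  have hsub : {x ∈ Icc (0 : ℝ) 1 | ENNReal.ofReal t ≤ locSlope f x}
      ⊆ Icc (c - t⁻¹) (c + t⁻¹) := by
    rintro x ⟨hx, hslope⟩
    have hdist : ENNReal.ofReal |x - c| ≤ ENNReal.ofReal t⁻¹ := by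
      rw [ENNReal.ofReal_inv_of_pos ht]
      exact ENNReal.le_inv_iff_le_inv.mp (hslope.trans (h x hx))
    have := abs_le.mp ((ENNReal.ofReal_le_ofReal_iff (inv_nonneg.mpr ht.le)).mp hdist)
    constructor <;> linarith [this.1, this.2]
  calc ENNReal.ofReal t * volume {x ∈ Icc (0 : ℝ) 1 | ENNReal.ofReal t ≤ locSlope f x}
      ≤ ENNReal.ofReal t * volume (Icc (c - t⁻¹) (c + t⁻¹)) := by gcongr
    _ = ENNReal.ofReal (t * (c + t⁻¹ - (c - t⁻¹))) := by
      rw [Real.volume_Icc, ENNReal.ofReal_mul ht.le]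
    _ = 2 := by
      rw [show t * (c + t⁻¹ - (c - t⁻¹)) = 2 by field_simp; ring]
      exact ENNReal.ofReal_ofNat 2

lemma lintegral_inv_ofReal_sub_eq_top {a b : ℝ} (hab : a < b) :
    ∫⁻ x in Ioc a b, (ENNReal.ofReal (x - a))⁻¹ = ∞ := by
  have hnot : ¬ IntegrableOn (fun x => (x - a)⁻¹) (Ioc a b) := by
    rw [← intervalIntegrable_iff_integrableOn_Ioc_of_le hab.le, intervalIntegrable_sub_inv_iff]
    simp [hab.ne, hab.le]
  contrapose! hnot
  refine ⟨by fun_prop, (hasFiniteIntegral_iff_ofReal ?_).mpr ?_⟩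
  · filter_upwards [ae_restrict_mem measurableSet_Ioc] with x hx
    exact inv_nonneg.mpr (sub_nonneg.mpr hx.1.le)
  · rwa [lt_top_iff_ne_top, setLIntegral_congr_fun measurableSet_Ioc
      fun x hx => ENNReal.ofReal_inv_of_pos (sub_pos.mpr hx.1)]

end General

noncomputable def stepAtHalf (x : ℝ) : ℝ := if 1 / 2 < x then 1 else 0

lemma stepAtHalf_of_lt {x : ℝ} (hx : 1 / 2 < x) : stepAtHalf x = 1 := if_pos hx

lemma stepAtHalf_of_le {x : ℝ} (hx : x ≤ 1 / 2) : stepAtHalf x = 0 := if_neg (not_lt.mpr hx)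

lemma monotone_stepAtHalf : Monotone stepAtHalf := by
  intro a b hab
  unfold stepAtHalf
  split_ifs with ha hb <;> first | exact absurd (ha.trans_le hab) hb | norm_num

lemma totalVar_stepAtHalf : totalVar stepAtHalf = 1 := by
  have := (monotone_stepAtHalf.monotoneOn univ).eVariationOn_eq (a := 0) (b := 1) trivial trivial
  rw [univ_inter] at this
  rw [totalVar, this]
  norm_num [stepAtHalf]

lemma abs_stepAtHalf_sub_of_ne {x x' : ℝ} (h : stepAtHalf x ≠ stepAtHalf x') :
    |stepAtHalf x - stepAtHalf x'| = 1 := by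
  unfold stepAtHalf at *
  split_ifs at * <;> norm_num at *

lemma abs_sub_half_le_of_stepAtHalf_ne {x x' : ℝ} (h : stepAtHalf x ≠ stepAtHalf x') :
    |x - 1 / 2| ≤ |x - x'| := by
  unfold stepAtHalf at h
  split_ifs at h with hx hx' <;> first | exact absurd rfl h |
    rw [abs_of_pos (by linarith), abs_of_pos (by linarith)]; linarith |
    rw [abs_of_nonpos (by linarith), abs_of_neg (by linarith)]; linarith

lemma inv_ofReal_abs_sub_le_locSlope_stepAtHalf {x x' : ℝ} (hx' : x' ∈ Icc (0 : ℝ) 1)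
    (h : stepAtHalf x ≠ stepAtHalf x') :
    (ENNReal.ofReal |x - x'|)⁻¹ ≤ locSlope stepAtHalf x := by
  have hne : x' ≠ x := by rintro rfl; exact h rfl
  have hpos : 0 < |x - x'| := abs_pos.mpr (sub_ne_zero.mpr hne.symm)
  calc (ENNReal.ofReal |x - x'|)⁻¹
      = ENNReal.ofReal (|stepAtHalf x - stepAtHalf x'| / |x - x'|) := by
        rw [abs_stepAtHalf_sub_of_ne h, one_div, ENNReal.ofReal_inv_of_pos hpos]
    _ ≤ locSlope stepAtHalf x := le_locSlope hx' hne

lemma locSlope_stepAtHalf_le (x : ℝ) :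
    locSlope stepAtHalf x ≤ (ENNReal.ofReal |x - 1 / 2|)⁻¹ := by
  refine iSup₂_le fun x' _ => iSup_le fun hne => ?_
  by_cases h : stepAtHalf x = stepAtHalf x'
  · simp [h]
  have hpos : 0 < |x - x'| := abs_pos.mpr (sub_ne_zero.mpr (Ne.symm hne))
  calc ENNReal.ofReal (|stepAtHalf x - stepAtHalf x'| / |x - x'|)
      = (ENNReal.ofReal |x - x'|)⁻¹ := by
        rw [abs_stepAtHalf_sub_of_ne h, one_div, ENNReal.ofReal_inv_of_pos hpos]
    _ ≤ (ENNReal.ofReal |x - 1 / 2|)⁻¹ :=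
        ENNReal.inv_le_inv.mpr (ENNReal.ofReal_le_ofReal (abs_sub_half_le_of_stepAtHalf_ne h))

lemma locSlope_stepAtHalf_of_mem_Ioc {x : ℝ} (hx : x ∈ Ioc (1 / 2 : ℝ) 1) :
    locSlope stepAtHalf x = (ENNReal.ofReal (x - 1 / 2))⁻¹ := by
  have habs : |x - 1 / 2| = x - 1 / 2 := abs_of_pos (sub_pos.mpr hx.1)
  refine le_antisymm (habs ▸ locSlope_stepAtHalf_le x) ?_
  rw [← habs]
  refine inv_ofReal_abs_sub_le_locSlope_stepAtHalf (by norm_num) ?_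
  rw [stepAtHalf_of_lt hx.1, stepAtHalf_of_le le_rfl]
  exact one_ne_zero

lemma strongNorm_stepAtHalf : strongNorm stepAtHalf = ∞ := by
  refine eq_top_iff.mpr ?_
  calc ∞ = ∫⁻ x in Ioc (1 / 2 : ℝ) 1, (ENNReal.ofReal (x - 1 / 2))⁻¹ :=
        (lintegral_inv_ofReal_sub_eq_top (by norm_num)).symm
    _ = ∫⁻ x in Ioc (1 / 2 : ℝ) 1, locSlope stepAtHalf x :=
        setLIntegral_congr_fun measurableSet_Ioc fun x hx =>
          (locSlope_stepAtHalf_of_mem_Ioc hx).symm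
    _ ≤ strongNorm stepAtHalf :=
        lintegral_mono_set (Ioc_subset_Icc_self.trans (Icc_subset_Icc (by norm_num) le_rfl))

lemma four_le_locSlope_stepAtHalf {x : ℝ} (hx : x ∈ Ioo (1 / 4 : ℝ) (3 / 4)) :
    4 ≤ locSlope stepAtHalf x := by
  obtain ⟨x', hx', hjump, hdist⟩ : ∃ x' ∈ Icc (0 : ℝ) 1,
      stepAtHalf x ≠ stepAtHalf x' ∧ |x - x'| = 1 / 4 := by
    rcases le_or_gt x (1 / 2) with hle | hlt
    · refine ⟨x + 1 / 4, ⟨by linarith [hx.1], by linarith⟩, ?_, by norm_num⟩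
      rw [stepAtHalf_of_le hle, stepAtHalf_of_lt (by linarith [hx.1])]
      exact zero_ne_one
    · refine ⟨x - 1 / 4, ⟨by linarith [hx.1], by linarith [hx.2]⟩, ?_, by norm_num⟩
      rw [stepAtHalf_of_lt hlt, stepAtHalf_of_le (by linarith [hx.2])]
      exact one_ne_zero
  calc (4 : ℝ≥0∞) = (ENNReal.ofReal |x - x'|)⁻¹ := by
        rw [hdist, ENNReal.ofReal_div_of_pos (by norm_num)]; norm_num
    _ ≤ locSlope stepAtHalf x := inv_ofReal_abs_sub_le_locSlope_stepAtHalf hx' hjump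

lemma weakNorm_stepAtHalf : weakNorm stepAtHalf = 2 := by
  refine le_antisymm
    (weakNorm_le_two_of_locSlope_le _ fun x _ => locSlope_stepAtHalf_le x) ?_
  have hsub : Ioo (1 / 4 : ℝ) (3 / 4)
      ⊆ {x ∈ Icc (0 : ℝ) 1 | ENNReal.ofReal 4 ≤ locSlope stepAtHalf x} := fun x hx =>
    ⟨Ioo_subset_Icc_self.trans (Icc_subset_Icc (by norm_num) (by norm_num)) hx,
      by simpa using four_le_locSlope_stepAtHalf hx⟩
  calc (2 : ℝ≥0∞) = ENNReal.ofReal 4 * volume (Ioo (1 / 4 : ℝ) (3 / 4)) := by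
        rw [Real.volume_Ioo, ← ENNReal.ofReal_mul (by norm_num)]; norm_num
    _ ≤ _ := mul_le_mul_right (measure_mono hsub) _
    _ ≤ weakNorm stepAtHalf := le_weakNorm (by norm_num)

/-- The step function `f = 𝟙(x > 1/2)` satisfies `V(f) = 1`, `‖f‖_s = ∞`, `‖f‖_w = 2`. -/
theorem step_function_properties :
    totalVar (fun x => if 1 / 2 < x then (1 : ℝ) else 0) = 1 ∧
    strongNorm (fun x => if 1 / 2 < x then (1 : ℝ) else 0) = ⊤ ∧
    weakNorm (fun x => if 1 / 2 < x then (1 : ℝ) else 0) = 2 :=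
  ⟨totalVar_stepAtHalf, strongNorm_stepAtHalf, weakNorm_stepAtHalf⟩
end

section
/- The function g : [0,1] → ℝ defined by g(0) = 0 and g(x) = x·sin(1/x) for x ∈ (0,1] satisfies V(g) = ∞ and ‖g‖_w < ∞. -/
open MeasureTheory Set ENNReal

/-!
Away from `0`, `g x = x sin (1/x)` satisfies `|g| ≤ |x|` and `|g'(y)| ≤ 1 + 1/y`. For a point
`x' < x/2` the first bound gives a slope of at most `3`; for `x' ≥ x/2` the mean value theorem on
`[x/2, ∞)` gives at most `1 + 2/x`. Hence `Λ_g(x) ≤ 3/x`, so `{Λ_g ≥ t} ⊆ [0, 3/t]` and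
`‖g‖_w ≤ 3`. At the points `1/(π/2 + kπ)` the graph alternates between the lines `y = x` and
`y = -x`, so consecutive jumps are at least `1/(π/2 + kπ)`, whose sum is a divergent harmonic series.
-/

open Real

theorem locSlope_le_of_abs_sub_le {f : ℝ → ℝ} {x L : ℝ}
    (h : ∀ x' ∈ Icc (0 : ℝ) 1, |f x - f x'| ≤ L * |x - x'|) :
    locSlope f x ≤ ENNReal.ofReal L :=
  iSup_le fun x' => iSup_le fun hx' => iSup_le fun hne => ENNReal.ofReal_le_ofReal <|
    (div_le_iff₀ (abs_pos.2 (sub_ne_zero.2 hne.symm))).2 (h x' hx')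

theorem weakNorm_le_of_locSlope_le {f : ℝ → ℝ} {C : ℝ} (hC : 0 ≤ C)
    (h : ∀ x ∈ Ioc (0 : ℝ) 1, locSlope f x ≤ ENNReal.ofReal (C / x)) :
    weakNorm f ≤ ENNReal.ofReal C := by
  refine iSup₂_le fun t ht => ?_
  have hsub : {x ∈ Icc (0 : ℝ) 1 | ENNReal.ofReal t ≤ locSlope f x} ⊆ Icc 0 (C / t) := by
    rintro x ⟨⟨hx0, hx1⟩, hxt⟩
    refine ⟨hx0, ?_⟩
    rcases hx0.eq_or_lt with rfl | hx
    · positivity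
    · have : t ≤ C / x :=
        (ENNReal.ofReal_le_ofReal_iff (by positivity)).1 (hxt.trans (h x ⟨hx, hx1⟩))
      exact (le_div_comm₀ ht hx).1 this
  calc ENNReal.ofReal t * volume {x ∈ Icc (0 : ℝ) 1 | ENNReal.ofReal t ≤ locSlope f x}
      ≤ ENNReal.ofReal t * ENNReal.ofReal (C / t) := by
        grw [hsub, Real.volume_Icc, sub_zero]
    _ = ENNReal.ofReal C := by rw [← ENNReal.ofReal_mul ht.le, mul_div_cancel₀ _ ht.ne']

theorem abs_sub_le_three_mul_of_abs_le_abs {f : ℝ → ℝ} (hf : ∀ y, |f y| ≤ |y|) {x x' : ℝ}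
    (hx' : 0 ≤ x') (hx'x : x' < x / 2) : |f x - f x'| ≤ 3 * |x - x'| := by
  have hx : 0 < x := by linarith
  calc |f x - f x'| ≤ |f x| + |f x'| := abs_sub _ _
    _ ≤ |x| + |x'| := add_le_add (hf x) (hf x')
    _ ≤ 3 * |x - x'| := by
        rw [abs_of_pos hx, abs_of_nonneg hx', abs_of_pos (by linarith : 0 < x - x')]
        linarith

theorem ENNReal.tsum_ofReal_eq_top_of_not_summable {α : Type*} {f : α → ℝ}
    (hf : ∀ a, 0 ≤ f a) (h : ¬Summable f) : ∑' a, ENNReal.ofReal (f a) = ⊤ :=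
  ENNReal.tsum_coe_eq_top_iff_not_summable_coe.2 <| by
    simpa only [Real.coe_toNNReal _ (hf _)] using h

theorem eVariationOn_eq_top_of_antitone {α E : Type*} [LinearOrder α] [PseudoEMetricSpace E]
    {f : α → E} {s : Set α} {a : ℕ → α} (ha : Antitone a) (has : ∀ k, a k ∈ s)
    (h : ∑' k, edist (f (a k)) (f (a (k + 1))) = ⊤) : eVariationOn f s = ⊤ := by
  rw [← eVariationOn.comp_ofDual, ← top_le_iff, ← h, ENNReal.tsum_eq_iSup_nat]
  refine iSup_le fun n => le_of_eq_of_le ?_ (eVariationOn.sum_le (n := n)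
    (u := fun k => OrderDual.toDual (a k)) (fun _ _ hkl => ha hkl) fun k => has k)
  simp only [Function.comp_apply, OrderDual.ofDual_toDual, edist_comm]

noncomputable def xSinInv (x : ℝ) : ℝ := x * sin (1 / x)

theorem abs_xSinInv_le (x : ℝ) : |xSinInv x| ≤ |x| := by
  rw [xSinInv, abs_mul]
  exact mul_le_of_le_one_right (abs_nonneg x) (abs_sin_le_one _)

theorem hasDerivAt_xSinInv {x : ℝ} (hx : x ≠ 0) :
    HasDerivAt xSinInv (sin (1 / x) - cos (1 / x) / x) x := by
  have hinv : HasDerivAt (fun y : ℝ => 1 / y) (-(x ^ 2)⁻¹) x := by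
    simpa only [one_div] using hasDerivAt_inv hx
  refine ((hasDerivAt_id' x).mul hinv.sin).congr_deriv ?_
  field_simp
  ring

theorem abs_deriv_xSinInv_le {x : ℝ} (hx : 0 < x) :
    |sin (1 / x) - cos (1 / x) / x| ≤ 1 + 1 / x :=
  calc |sin (1 / x) - cos (1 / x) / x| ≤ |sin (1 / x)| + |cos (1 / x) / x| := abs_sub _ _
    _ = |sin (1 / x)| + |cos (1 / x)| / x := by rw [abs_div, abs_of_pos hx]
    _ ≤ 1 + 1 / x := by
        gcongr
        · exact abs_sin_le_one _
        · exact abs_cos_le_one _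

theorem abs_xSinInv_sub_le_of_half_le {x x' : ℝ} (hx : 0 < x) (hx'x : x / 2 ≤ x') :
    |xSinInv x - xSinInv x'| ≤ (1 + 2 / x) * |x - x'| := by
  have hpos : ∀ y ∈ Ici (x / 2), 0 < y := fun y hy => lt_of_lt_of_le (by positivity) hy
  refine (convex_Ici (x / 2)).norm_image_sub_le_of_norm_hasDerivWithin_le
    (fun y hy => (hasDerivAt_xSinInv (hpos y hy).ne').hasDerivWithinAt)
    (fun y hy => ?_) hx'x (mem_Ici.2 (by linarith))
  calc ‖sin (1 / y) - cos (1 / y) / y‖ ≤ 1 + 1 / y := abs_deriv_xSinInv_le (hpos y hy)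
    _ ≤ 1 + 2 / x := by
        rw [add_le_add_iff_left, div_le_div_iff₀ (hpos y hy) hx]
        linarith [mem_Ici.1 hy]

theorem abs_xSinInv_sub_le {x x' : ℝ} (hx : 0 < x) (hx1 : x ≤ 1) (hx' : 0 ≤ x') :
    |xSinInv x - xSinInv x'| ≤ 3 / x * |x - x'| := by
  rcases lt_or_ge x' (x / 2) with hfar | hnear
  · calc |xSinInv x - xSinInv x'| ≤ 3 * |x - x'| :=
          abs_sub_le_three_mul_of_abs_le_abs abs_xSinInv_le hx' hfar
      _ ≤ 3 / x * |x - x'| := by gcongr; exact le_div_self (by norm_num) hx hx1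
  · calc |xSinInv x - xSinInv x'| ≤ (1 + 2 / x) * |x - x'| :=
          abs_xSinInv_sub_le_of_half_le hx hnear
      _ ≤ 3 / x * |x - x'| := by
          gcongr
          rw [show 3 / x = 1 / x + 2 / x by ring]
          gcongr
          exact one_le_one_div hx hx1

theorem weakNorm_xSinInv_le : weakNorm xSinInv ≤ ENNReal.ofReal 3 :=
  weakNorm_le_of_locSlope_le (by norm_num) fun _ hx =>
    locSlope_le_of_abs_sub_le fun _ hx' => abs_xSinInv_sub_le hx.1 hx.2 hx'.1

noncomputable def xSinInvPeak (k : ℕ) : ℝ := 1 / (π / 2 + k * π)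

theorem xSinInvPeak_pos (k : ℕ) : 0 < xSinInvPeak k := by
  unfold xSinInvPeak; positivity

theorem antitone_xSinInvPeak : Antitone xSinInvPeak := fun k l hkl => by
  unfold xSinInvPeak
  gcongr

theorem xSinInvPeak_mem_Icc (k : ℕ) : xSinInvPeak k ∈ Icc (0 : ℝ) 1 := by
  refine ⟨(xSinInvPeak_pos k).le, (antitone_xSinInvPeak k.zero_le).trans ?_⟩
  rw [xSinInvPeak, Nat.cast_zero, zero_mul, add_zero, div_le_one (by positivity)]
  linarith [pi_gt_three]

theorem xSinInv_xSinInvPeak (k : ℕ) : xSinInv (xSinInvPeak k) = (-1) ^ k * xSinInvPeak k := by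
  rw [xSinInv, xSinInvPeak, one_div_one_div, sin_add_nat_mul_pi, sin_pi_div_two, mul_one,
    mul_comm]

theorem xSinInvPeak_le_edist (k : ℕ) : ENNReal.ofReal (xSinInvPeak k) ≤
    edist (xSinInv (xSinInvPeak k)) (xSinInv (xSinInvPeak (k + 1))) := by
  have hk := xSinInvPeak_pos k
  have hk' := xSinInvPeak_pos (k + 1)
  rw [edist_dist, Real.dist_eq, xSinInv_xSinInvPeak, xSinInv_xSinInvPeak, pow_succ,
    mul_neg_one, neg_mul, sub_neg_eq_add, ← mul_add, abs_mul, abs_pow, abs_neg, abs_one,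
    one_pow, one_mul, abs_of_pos (by positivity)]
  exact ENNReal.ofReal_le_ofReal (by linarith)

theorem not_summable_xSinInvPeak : ¬Summable xSinInvPeak := by
  intro h
  refine Real.not_summable_one_div_natCast <| (summable_nat_add_iff 1).1 ?_
  refine (h.mul_left π).of_nonneg_of_le (fun k => by positivity) fun k => ?_
  rw [xSinInvPeak, mul_one_div, le_div_iff₀ (by positivity)]
  push_cast
  field_simp
  linarith

theorem totalVar_xSinInv : totalVar xSinInv = ⊤ := by
  refine eVariationOn_eq_top_of_antitone antitone_xSinInvPeak xSinInvPeak_mem_Icc ?_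
  refine top_le_iff.1 ?_
  rw [← ENNReal.tsum_ofReal_eq_top_of_not_summable (fun k => (xSinInvPeak_pos k).le)
    not_summable_xSinInvPeak]
  exact ENNReal.tsum_le_tsum xSinInvPeak_le_edist

/-- `g(x) = x·sin(1/x)` (with `g(0) = 0`) has infinite variation but finite weak
average smoothness. -/
theorem x_sin_inv_x_properties :
    totalVar (fun x : ℝ => x * Real.sin (1 / x)) = ⊤ ∧
    weakNorm (fun x : ℝ => x * Real.sin (1 / x)) < ⊤ :=
  ⟨totalVar_xSinInv, weakNorm_xSinInv_le.trans_lt ENNReal.ofReal_lt_top⟩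
end
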